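/- Let a : ℝ → ℝ be almost periodic with M[a] < 0 and b : [0,∞) → ℝ continuous with b(t) → 0 as t → ∞. Then every solution v of v' = a(t)v + b(t) on [0,∞) satisfies v(t) → 0 as t → ∞. -/

import Mathlib

/-- Bohr almost periodicity. -/
def AlmostPeriodic (a : ℝ → ℝ) : Prop :=
  ∀ ε > 0, ∃ ℓ > 0, ∀ x : ℝ, ∃ τ ∈ Set.Icc x (x + ℓ), ∀ t, |a (t + τ) - a t| < ε

/-- `μ` is the mean of `a`, uniformly in the left endpoint. -/
def HasUniformMean (a : ℝ → ℝ) (μ : ℝ) : Prop :=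
  ∀ ε > 0, ∃ L₀ > 0, ∀ L ≥ L₀, ∀ c : ℝ,
    |(1 / L) * (∫ s in c..(c + L), a s) - μ| < ε

lemma ap_bounded (a : ℝ → ℝ) (ha : Continuous a) (hap : AlmostPeriodic a) :
    ∃ A ≥ 0, ∀ t, |a t| ≤ A := by
  obtain ⟨ℓ, hℓ, h⟩ := hap 1 one_pos
  obtain ⟨C, hC⟩ := (isCompact_Icc (a := (0:ℝ)) (b := ℓ)).exists_bound_of_continuousOn
    ha.continuousOn
  refine ⟨C + 1, ?_, fun t => ?_⟩
  · have := hC 0 ⟨le_refl 0, hℓ.le⟩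
    have : (0:ℝ) ≤ C := le_trans (abs_nonneg _) this
    linarith
  · obtain ⟨τ, hτ, hτ'⟩ := h (-t)
    have h1 : t + τ ∈ Set.Icc (0:ℝ) ℓ := ⟨by linarith [hτ.1], by linarith [hτ.2]⟩
    have h2 := hC _ h1
    have h3 := hτ' t
    calc |a t| ≤ |a (t + τ)| + |a (t + τ) - a t| := by
          have := abs_sub_abs_le_abs_sub (a t) (a (t + τ))
          rw [abs_sub_comm] at this
          linarith [abs_sub_abs_le_abs_sub (a t) (a (t+τ))]
      _ ≤ C + 1 := by
          have := abs_sub_comm (a (t+τ)) (a t)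
          simp only [Real.norm_eq_abs] at h2
          nlinarith [h3, h2]

lemma exp_est (a : ℝ → ℝ) (ha : Continuous a) (μ : ℝ) (hμ : HasUniformMean a μ)
    (hneg : μ < 0) (A : ℝ) (hA0 : 0 ≤ A) (hA : ∀ t, |a t| ≤ A) :
    ∃ C ≥ 0, ∀ s t : ℝ, s ≤ t → (∫ u in s..t, a u) ≤ C - (-μ/2) * (t - s) := by
  set α := -μ/2 with hα
  have hαpos : 0 < α := by simp [hα]; linarith
  obtain ⟨L₀, hL₀, hL⟩ := hμ α hαpos
  refine ⟨(A + α) * L₀, by positivity, fun s t hst => ?_⟩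
  rcases le_or_gt L₀ (t - s) with hc | hc
  · have hLpos : 0 < t - s := lt_of_lt_of_le hL₀ hc
    have := hL (t - s) hc s
    have heq : s + (t - s) = t := by ring
    rw [heq] at this
    have h2 : (1 / (t - s)) * (∫ u in s..t, a u) - μ < α := (abs_lt.mp this).2
    rw [one_div, inv_mul_eq_div, sub_lt_iff_lt_add, div_lt_iff₀ hLpos] at h2
    have hμα : α + μ = -α := by rw [hα]; ring
    rw [hμα] at h2
    nlinarith [mul_nonneg (add_nonneg hA0 hαpos.le) hL₀.le]
  · have h1 : (∫ u in s..t, a u) ≤ A * (t - s) := by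
      calc (∫ u in s..t, a u) ≤ |∫ u in s..t, a u| := le_abs_self _
        _ ≤ ∫ u in s..t, |a u| := intervalIntegral.abs_integral_le_integral_abs hst
        _ ≤ ∫ u in s..t, A := by
            apply intervalIntegral.integral_mono_on hst
            · exact (ha.abs).intervalIntegrable _ _
            · exact intervalIntegrable_const
            · exact fun x _ => hA x
        _ = A * (t - s) := by simp [mul_comm]
    nlinarith [hc, hst, hαpos, hL₀]

/-- If `M[a] < 0` and `b(t) → 0` then every solution of `v' = a(t)v + b(t)` tends to 0. -/
theorem stmt_12 (a b : ℝ → ℝ) (ha : Continuous a) (hap : AlmostPeriodic a)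
    (μ : ℝ) (hμ : HasUniformMean a μ) (hneg : μ < 0)
    (hbc : Continuous b) (hb : Filter.Tendsto b Filter.atTop (nhds 0))
    (v : ℝ → ℝ) (hv : ∀ t, 0 ≤ t → HasDerivAt v (a t * v t + b t) t) :
    Filter.Tendsto v Filter.atTop (nhds 0) := by
  obtain ⟨A, hA0, hA⟩ := ap_bounded a ha hap
  obtain ⟨C, hC0, hC⟩ := exp_est a ha μ hμ hneg A hA0 hA
  set α : ℝ := -μ/2 with hαdef
  have hα : 0 < α := by rw [hαdef]; linarith
  set K : ℝ := Real.exp C with hKdef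
  have hK1 : 1 ≤ K := by rw [hKdef]; simpa using Real.exp_le_exp.mpr hC0 |>.trans_eq' Real.exp_zero
  have hKpos : 0 < K := lt_of_lt_of_le one_pos hK1
  -- primitive of a
  set F : ℝ → ℝ := fun t => ∫ u in (0:ℝ)..t, a u with hFdef
  have hF : ∀ t, HasDerivAt F (a t) t := fun t =>
    intervalIntegral.integral_hasDerivAt_right (ha.intervalIntegrable 0 t)
      (ha.stronglyMeasurableAtFilter _ _) ha.continuousAt
  have hFc : Continuous F := continuous_iff_continuousAt.mpr fun t => (hF t).continuousAt
  have hF0 : F 0 = 0 := intervalIntegral.integral_same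
  have hFsub : ∀ s t : ℝ, F t - F s = ∫ u in s..t, a u := by
    intro s t
    have := intervalIntegral.integral_add_adjacent_intervals
      (ha.intervalIntegrable 0 s) (ha.intervalIntegrable s t) (μ := MeasureTheory.volume)
    simp only [hFdef]
    linarith [this]
  -- exponential decay of exp (F t - F s)
  have hExp : ∀ s t : ℝ, s ≤ t → Real.exp (F t - F s) ≤ K * Real.exp (-(α*(t-s))) := by
    intro s t hst
    have h1 := hC s t hst
    rw [← hFsub s t] at h1
    calc Real.exp (F t - F s) ≤ Real.exp (C - α*(t-s)) := by
          exact Real.exp_le_exp.mpr (by linarith)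
      _ = K * Real.exp (-(α*(t-s))) := by
          rw [Real.exp_sub, Real.exp_neg, hKdef]; ring
  -- the function w
  set w : ℝ → ℝ := fun t => v t * Real.exp (-F t) with hwdef
  have hw : ∀ t, 0 ≤ t → HasDerivAt w (b t * Real.exp (-F t)) t := by
    intro t ht
    have h1 := (hv t ht).mul ((hF t).neg.exp)
    refine h1.congr_deriv ?_
    simp only [Pi.neg_apply]
    ring
  have hcontexp : Continuous (fun s => Real.exp (-F s)) := Real.continuous_exp.comp hFc.neg
  have hwint : ∀ t, 0 ≤ t → w t = w 0 + ∫ s in (0:ℝ)..t, b s * Real.exp (-F s) := by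
    intro t ht
    have h1 : ∫ s in (0:ℝ)..t, b s * Real.exp (-F s) = w t - w 0 := by
      apply intervalIntegral.integral_eq_sub_of_hasDerivAt
      · intro x hx
        rw [Set.uIcc_of_le ht] at hx
        exact hw x hx.1
      · exact (hbc.mul hcontexp).intervalIntegrable _ _
    linarith [h1]
  have hw0 : w 0 = v 0 := by rw [hwdef]; simp [hF0]
  have hvw : ∀ t, v t = w t * Real.exp (F t) := by
    intro t
    rw [hwdef]
    simp [mul_assoc, ← Real.exp_add]
  -- main pointwise bound
  have hbd : ∀ t, 0 ≤ t → |v t| ≤ K * Real.exp (-(α*t)) * |v 0|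
      + K * ∫ s in (0:ℝ)..t, Real.exp (-(α*(t-s))) * |b s| := by
    intro t ht
    have h1 : |v t| ≤ (|v 0| + ∫ s in (0:ℝ)..t, |b s| * Real.exp (-F s)) * Real.exp (F t) := by
      rw [hvw t, abs_mul, abs_of_pos (Real.exp_pos _)]
      gcongr
      rw [hwint t ht, hw0]
      calc |v 0 + ∫ s in (0:ℝ)..t, b s * Real.exp (-F s)|
          ≤ |v 0| + |∫ s in (0:ℝ)..t, b s * Real.exp (-F s)| := abs_add_le _ _
        _ ≤ |v 0| + ∫ s in (0:ℝ)..t, |b s| * Real.exp (-F s) := by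
            gcongr
            calc |∫ s in (0:ℝ)..t, b s * Real.exp (-F s)|
                ≤ ∫ s in (0:ℝ)..t, |b s * Real.exp (-F s)| :=
                  intervalIntegral.abs_integral_le_integral_abs ht
              _ = ∫ s in (0:ℝ)..t, |b s| * Real.exp (-F s) := by
                  congr 1; funext s
                  rw [abs_mul, abs_of_pos (Real.exp_pos _)]
    have h2 : Real.exp (F t) * ∫ s in (0:ℝ)..t, |b s| * Real.exp (-F s)
        = ∫ s in (0:ℝ)..t, Real.exp (F t - F s) * |b s| := by
      rw [← intervalIntegral.integral_const_mul]
      congr 1; funext s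
      rw [Real.exp_sub, Real.exp_neg]; ring
    have h3 : Real.exp (F t) * |v 0| ≤ K * Real.exp (-(α*t)) * |v 0| := by
      have := hExp 0 t ht
      rw [hF0, sub_zero] at this
      have h4 : Real.exp (F t) ≤ K * Real.exp (-(α*t)) := by simpa using this
      exact mul_le_mul_of_nonneg_right h4 (abs_nonneg _)
    have h5 : (∫ s in (0:ℝ)..t, Real.exp (F t - F s) * |b s|)
        ≤ K * ∫ s in (0:ℝ)..t, Real.exp (-(α*(t-s))) * |b s| := by
      rw [← intervalIntegral.integral_const_mul]
      apply intervalIntegral.integral_mono_on ht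
      · exact ((Real.continuous_exp.comp ((hFc.comp continuous_const).sub hFc)).mul
          hbc.abs).intervalIntegrable _ _
      · exact (continuous_const.mul ((Real.continuous_exp.comp
          (continuous_const.mul (continuous_const.sub continuous_id)).neg).mul hbc.abs)).intervalIntegrable _ _
      · intro s hs
        have := hExp s t hs.2
        calc Real.exp (F t - F s) * |b s| ≤ (K * Real.exp (-(α*(t-s)))) * |b s| :=
            mul_le_mul_of_nonneg_right this (abs_nonneg _)
          _ = K * (Real.exp (-(α*(t-s))) * |b s|) := by ring
    calc |v t| ≤ (|v 0| + ∫ s in (0:ℝ)..t, |b s| * Real.exp (-F s)) * Real.exp (F t) := h1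
      _ = Real.exp (F t) * |v 0| + Real.exp (F t) * ∫ s in (0:ℝ)..t, |b s| * Real.exp (-F s) := by
          ring
      _ = Real.exp (F t) * |v 0| + ∫ s in (0:ℝ)..t, Real.exp (F t - F s) * |b s| := by rw [h2]
      _ ≤ _ := add_le_add h3 h5
  -- final epsilon argument
  rw [Metric.tendsto_atTop]
  intro ε hε
  have hδ : 0 < ε*α/(4*K) := by positivity
  obtain ⟨T₀, hT₀⟩ := Metric.tendsto_atTop.mp hb (ε*α/(4*K)) hδ
  set T := max T₀ 0 with hTdef
  have hT0 : (0:ℝ) ≤ T := le_max_right _ _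
  have hbsmall : ∀ s, T ≤ s → |b s| ≤ ε*α/(4*K) := by
    intro s hs
    have := hT₀ s (le_trans (le_max_left _ _) hs)
    rw [Real.dist_eq, sub_zero] at this
    exact this.le
  set B := ∫ s in (0:ℝ)..T, |b s| with hBdef
  have hB0 : 0 ≤ B := intervalIntegral.integral_nonneg hT0 (fun s _ => abs_nonneg _)
  have htendexp : Filter.Tendsto (fun t : ℝ => Real.exp (-(α*t))) Filter.atTop (nhds 0) := by
    apply Real.tendsto_exp_atBot.comp
    have h0 : Filter.Tendsto (fun t : ℝ => α*t) Filter.atTop Filter.atTop :=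
      Filter.Tendsto.const_mul_atTop hα Filter.tendsto_id
    exact Filter.tendsto_neg_atBot_iff.mpr h0
  have hev : ∀ᶠ t in Filter.atTop,
      K * Real.exp (-(α*t)) * (|v 0| + Real.exp (α*T) * B) < ε/2 := by
    have h1 : Filter.Tendsto (fun t : ℝ => K * Real.exp (-(α*t)) * (|v 0| + Real.exp (α*T) * B))
        Filter.atTop (nhds 0) := by
      have := (htendexp.const_mul K).mul_const (|v 0| + Real.exp (α*T) * B)
      simpa using this
    exact h1.eventually_lt_const (by linarith)
  rw [← Filter.eventually_atTop]
  filter_upwards [hev, Filter.eventually_ge_atTop T] with t h1 h2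
  rw [Real.dist_eq, sub_zero]
  have ht0 : (0:ℝ) ≤ t := le_trans hT0 h2
  have hg : Continuous (fun s => Real.exp (-(α*(t-s))) * |b s|) :=
    (Real.continuous_exp.comp (continuous_const.mul (continuous_const.sub continuous_id)).neg).mul
      hbc.abs
  have hgexp : Continuous (fun s : ℝ => Real.exp (-(α*(t-s)))) :=
    Real.continuous_exp.comp (continuous_const.mul (continuous_const.sub continuous_id)).neg
  have hsplit : (∫ s in (0:ℝ)..t, Real.exp (-(α*(t-s))) * |b s|)
      = (∫ s in (0:ℝ)..T, Real.exp (-(α*(t-s))) * |b s|)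
        + ∫ s in T..t, Real.exp (-(α*(t-s))) * |b s| :=
    (intervalIntegral.integral_add_adjacent_intervals (hg.intervalIntegrable _ _)
      (hg.intervalIntegrable _ _)).symm
  have hI1 : (∫ s in (0:ℝ)..T, Real.exp (-(α*(t-s))) * |b s|)
      ≤ Real.exp (-(α*(t-T))) * B := by
    rw [hBdef, ← intervalIntegral.integral_const_mul]
    apply intervalIntegral.integral_mono_on hT0 (hg.intervalIntegrable _ _)
      ((continuous_const.mul hbc.abs).intervalIntegrable _ _)
    intro s hs
    have hle : Real.exp (-(α*(t-s))) ≤ Real.exp (-(α*(t-T))) :=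
      Real.exp_le_exp.mpr (by nlinarith [hα, hs.2])
    exact mul_le_mul_of_nonneg_right hle (abs_nonneg _)
  have hval : (∫ s in T..t, Real.exp (-(α*(t-s)))) = (1 - Real.exp (-(α*(t-T))))/α := by
    have hd : ∀ s ∈ Set.uIcc T t,
        HasDerivAt (fun s => Real.exp (-(α*(t-s)))/α) (Real.exp (-(α*(t-s)))) s := by
      intro s _
      have h0 : HasDerivAt (fun s : ℝ => α*s - α*t) α s := by
        simpa using ((hasDerivAt_id s).const_mul α).sub_const (α*t)
      have heq : (fun s : ℝ => Real.exp (-(α*(t-s)))/α)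
          = fun s : ℝ => Real.exp (α*s - α*t)/α := by
        funext u; congr 1; ring_nf
      rw [heq]
      have h2 := h0.exp.div_const α
      have heq2 : α*s - α*t = -(α*(t-s)) := by ring
      rw [heq2] at h2
      refine h2.congr_deriv ?_
      field_simp
    rw [intervalIntegral.integral_eq_sub_of_hasDerivAt hd (hgexp.intervalIntegrable _ _)]
    rw [sub_self, mul_zero, neg_zero, Real.exp_zero]
    ring
  have hI2 : (∫ s in T..t, Real.exp (-(α*(t-s))) * |b s|) ≤ ε/(4*K) := by
    calc (∫ s in T..t, Real.exp (-(α*(t-s))) * |b s|)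
        ≤ ∫ s in T..t, Real.exp (-(α*(t-s))) * (ε*α/(4*K)) := by
          apply intervalIntegral.integral_mono_on h2 (hg.intervalIntegrable _ _)
            ((hgexp.mul continuous_const).intervalIntegrable _ _)
          intro s hs
          exact mul_le_mul_of_nonneg_left (hbsmall s hs.1) (Real.exp_pos _).le
      _ = (ε*α/(4*K)) * ∫ s in T..t, Real.exp (-(α*(t-s))) := by
          rw [← intervalIntegral.integral_const_mul]
          congr 1; funext s; ring
      _ = (ε*α/(4*K)) * ((1 - Real.exp (-(α*(t-T))))/α) := by rw [hval]
      _ ≤ ε/(4*K) := by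
          have he0 : (0:ℝ) < Real.exp (-(α*(t-T))) := Real.exp_pos _
          have h3 : (1 - Real.exp (-(α*(t-T))))/α ≤ 1/α := by
            gcongr
            linarith
          calc (ε*α/(4*K)) * ((1 - Real.exp (-(α*(t-T))))/α)
              ≤ (ε*α/(4*K)) * (1/α) := by
                exact mul_le_mul_of_nonneg_left h3 (by positivity)
            _ = ε/(4*K) := by field_simp
  have hfinal := hbd t ht0
  rw [hsplit] at hfinal
  have hmul : K * ((∫ s in (0:ℝ)..T, Real.exp (-(α*(t-s))) * |b s|)
      + ∫ s in T..t, Real.exp (-(α*(t-s))) * |b s|)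
      ≤ K * (Real.exp (-(α*(t-T))) * B + ε/(4*K)) :=
    mul_le_mul_of_nonneg_left (add_le_add hI1 hI2) hKpos.le
  have hexpeq : Real.exp (-(α*(t-T))) = Real.exp (-(α*t)) * Real.exp (α*T) := by
    rw [← Real.exp_add]; ring_nf
  have hK4 : K * (ε/(4*K)) = ε/4 := by field_simp
  have hid : K * Real.exp (-(α*t)) * |v 0|
      + K * (Real.exp (-(α*t)) * Real.exp (α*T) * B)
      = K * Real.exp (-(α*t)) * (|v 0| + Real.exp (α*T) * B) := by ring
  rw [hexpeq] at hmul
  have : |v t| ≤ K * Real.exp (-(α*t)) * (|v 0| + Real.exp (α*T) * B) + ε/4 := by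
    nlinarith [hfinal, hmul, hK4, hid]
  linarith
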